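/- Let $n = 2l$ be an even natural number and let $f : [0,1] \times [0,1] \to \mathbb{R}$ be continuous and symmetric. Then $\int_{\{0 \le s_1 \le \cdots \le s_n \le 1\}} \sum_{\mathcal{P}} \prod_{\{i,j\} \in \mathcal{P}} f(s_i,s_j) \, \mathrm{d}s_1 \cdots \mathrm{d}s_n = \frac{1}{l! \, 2^l} \left( \int_{[0,1]^2} f(s_1,s_2) \, \mathrm{d}s_1 \mathrm{d}s_2 \right)^l$, where the sum is over all pairings $\mathcal{P}$ of $\{1,\dots,n\}$. -/

import Mathlib

/-!
The integrand is the hafnian of the matrix `(f (sᵢ) (sⱼ))`, so it is invariant under permuting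
the `sᵢ`. The regions `{s | s ∘ σ monotone}`, `σ` a permutation, tile the cube `[0,1]ⁿ` up to
the null set where two coordinates coincide, hence the integral over the ordered simplex is
`1/(2l)!` times the integral over the cube. Under the uniform measure on the cube the coordinates
are independent, so for each pairing the product over its disjoint pairs integrates to
`(∫∫ f)^l`. Finally, there are `(2l)!/(l! 2^l)` pairings: pairing a fixed point with one of the
`2l - 1` others leaves a pairing of the remaining `2l - 2` points.

To have global measurability and integrability, `f` is first replaced by
`(x, y) ↦ f (proj x) (proj y)`, `proj` the projection onto `[0,1]`, which is continuous and
symmetric on all of `ℝ²` and agrees with `f` on the square.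
-/

open MeasureTheory

noncomputable section

/-- `P` is a pairing of the finite set `O`: a collection of pairwise disjoint
two-element subsets of `O` whose union is `O`. -/
def IsPairing {ι : Type*} [DecidableEq ι] (O : Finset ι) (P : Finset (Finset ι)) : Prop :=
  (∀ p ∈ P, p.card = 2) ∧ (∀ p ∈ P, ∀ p' ∈ P, p ≠ p' → Disjoint p p') ∧ P.biUnion id = O

open Classical in
/-- The (finite) collection of all pairings of a finite set `O`. -/
def pairings {ι : Type*} [DecidableEq ι] (O : Finset ι) : Finset (Finset (Finset ι)) :=
  O.powerset.powerset.filter fun P => IsPairing O P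

/-- The value of a symmetric kernel `A` on an unordered pair `p = {a, b}`:
for a two-element set `p = {a, b}` this is the symmetrization `(A a b + A b a) / 2`,
which equals `A a b` whenever `A` is symmetric. -/
def pairVal {ι : Type*} (A : ι → ι → ℝ) (p : Finset ι) : ℝ :=
  ((∑ a ∈ p, ∑ b ∈ p, A a b) - ∑ a ∈ p, A a a) / 2

/-- The ordered simplex `{0 ≤ s₁ ≤ ⋯ ≤ sₙ ≤ 1} ⊆ [0,1]ⁿ`. -/
def orderedSimplex (n : ℕ) : Set (Fin n → ℝ) :=
  {s | Monotone s ∧ ∀ i, s i ∈ Set.Icc (0 : ℝ) 1}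

section PairVal

variable {ι : Type*}

theorem pairVal_congr {A B : ι → ι → ℝ} {p : Finset ι} (h : ∀ i ∈ p, ∀ j ∈ p, A i j = B i j) :
    pairVal A p = pairVal B p := by
  unfold pairVal
  rw [Finset.sum_congr rfl fun i hi => Finset.sum_congr rfl fun j hj => h i hi j hj,
    Finset.sum_congr rfl fun i hi => h i hi i hi]

theorem pairVal_pair [DecidableEq ι] (A : ι → ι → ℝ) {a b : ι} (hab : a ≠ b) :
    pairVal A {a, b} = (A a b + A b a) / 2 := by
  simp only [pairVal, Finset.sum_pair hab]
  ring

theorem pairVal_pair_of_symm [DecidableEq ι] {A : ι → ι → ℝ} (hA : ∀ i j, A i j = A j i)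
    {a b : ι} (hab : a ≠ b) : pairVal A {a, b} = A a b := by
  rw [pairVal_pair A hab, hA b a, add_self_div_two]

theorem pairVal_image {κ : Type*} [DecidableEq ι] {g : κ → ι} (hg : g.Injective)
    (A : ι → ι → ℝ) (p : Finset κ) :
    pairVal A (p.image g) = pairVal (fun i j => A (g i) (g j)) p := by
  simp only [pairVal, Finset.sum_image hg.injOn]

theorem measurable_pairVal {α : Type*} [MeasurableSpace α] {F : α → α → ℝ}
    (hFm : Measurable (Function.uncurry F)) (p : Finset ι) :
    Measurable fun x : ι → α => pairVal (fun i j => F (x i) (x j)) p := by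
  have (i j : ι) : Measurable fun x : ι → α => F (x i) (x j) :=
    hFm.comp (f := fun x : ι → α => (x i, x j)) (by fun_prop)
  unfold pairVal
  fun_prop

theorem dependsOn_pairVal {α : Type*} (F : α → α → ℝ) (p : Finset ι) :
    DependsOn (fun x : ι → α => pairVal (fun i j => F (x i) (x j)) p) p :=
  fun x y hxy => pairVal_congr fun i hi j hj => by rw [hxy i hi, hxy j hj]

end PairVal

section Pairings

variable {ι : Type*} [DecidableEq ι] {O : Finset ι} {P : Finset (Finset ι)}

theorem mem_pairings : P ∈ pairings O ↔ IsPairing O P := by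
  classical
  refine ⟨fun h => (Finset.mem_filter.1 h).2, fun hP => Finset.mem_filter.2 ⟨?_, hP⟩⟩
  refine Finset.mem_powerset.2 fun p hp => Finset.mem_powerset.2 fun i hi => ?_
  rw [← hP.2.2]
  exact Finset.mem_biUnion.2 ⟨p, hp, hi⟩

theorem IsPairing.pairwiseDisjoint (hP : IsPairing O P) :
    (P : Set (Finset ι)).PairwiseDisjoint id :=
  fun p hp p' hp' => hP.2.1 p hp p' hp'

theorem IsPairing.subset (hP : IsPairing O P) {p : Finset ι} (hp : p ∈ P) : p ⊆ O :=
  hP.2.2 ▸ Finset.subset_biUnion_of_mem id hp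

theorem IsPairing.two_mul_card (hP : IsPairing O P) : 2 * P.card = O.card := by
  rw [← hP.2.2, Finset.card_biUnion hP.pairwiseDisjoint]
  exact ((Finset.sum_const_nat hP.1).trans (mul_comm _ _)).symm

theorem pairings_empty : pairings (∅ : Finset ι) = {∅} := by
  ext P
  rw [mem_pairings, Finset.mem_singleton]
  exact ⟨fun hP => by simpa using hP.two_mul_card, fun h => ⟨by simp [h], by simp [h], by simp [h]⟩⟩

theorem IsPairing.exists_pair_mem (hP : IsPairing O P) {a : ι} (ha : a ∈ O) :
    ∃ b ∈ O.erase a, {a, b} ∈ P := by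
  obtain ⟨p, hp, hap⟩ := Finset.mem_biUnion.1 (hP.2.2 ▸ ha)
  obtain ⟨b, hba, rfl⟩ : ∃ b, b ≠ a ∧ p = {a, b} := by
    obtain ⟨x, y, hxy, rfl⟩ := Finset.card_eq_two.1 (hP.1 p hp)
    rcases Finset.mem_insert.1 hap with rfl | hay
    · exact ⟨y, hxy.symm, rfl⟩
    · obtain rfl := Finset.mem_singleton.1 hay
      exact ⟨x, hxy, Finset.pair_comm _ _⟩
  exact ⟨b, Finset.mem_erase.2 ⟨hba, hP.subset hp (by simp)⟩, hp⟩

theorem IsPairing.erase (hP : IsPairing O P) {q : Finset ι} (hq : q ∈ P) :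
    IsPairing (O \ q) (P.erase q) := by
  refine ⟨fun p hp => hP.1 p (Finset.mem_of_mem_erase hp), fun p hp p' hp' =>
    hP.2.1 p (Finset.mem_of_mem_erase hp) p' (Finset.mem_of_mem_erase hp'), ?_⟩
  have hdisj : Disjoint q ((P.erase q).biUnion id) :=
    (Finset.disjoint_biUnion_right _ _ _).2 fun p hp =>
      hP.2.1 q hq p (Finset.mem_of_mem_erase hp) (Finset.ne_of_mem_erase hp).symm
  calc (P.erase q).biUnion id = (q ∪ (P.erase q).biUnion id) \ q :=
        (Finset.union_sdiff_cancel_left hdisj).symm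
    _ = O \ q := by rw [← hP.2.2, ← Finset.insert_erase hq, Finset.biUnion_insert,
        Finset.erase_insert (Finset.notMem_erase q P)]; rfl

theorem IsPairing.insert {q : Finset ι} (hP : IsPairing (O \ q) P) (hq : q.card = 2)
    (hqO : q ⊆ O) : IsPairing O (insert q P) := by
  refine ⟨Finset.forall_mem_insert _ _ _ |>.2 ⟨hq, hP.1⟩, ?_, ?_⟩
  · have := hP.pairwiseDisjoint.insert fun p hp _ =>
      Finset.disjoint_of_subset_right (hP.subset hp) Finset.disjoint_sdiff
    exact fun p hp p' hp' => this (by simpa using hp) (by simpa using hp')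
  · rw [Finset.biUnion_insert, hP.2.2, id, Finset.union_sdiff_of_subset hqO]

theorem card_pairings_eq_sum {a : ι} (ha : a ∈ O) :
    (pairings O).card = ∑ b ∈ O.erase a, (pairings (O \ {a, b})).card := by
  have hnotMem {b c : ι} {Q : Finset (Finset ι)} (hQ : Q ∈ pairings (O \ {a, b})) :
      {a, c} ∉ Q := fun hc => by
    simpa using (mem_pairings.1 hQ).subset hc (Finset.mem_insert_self a {c})
  rw [← Finset.card_sigma]
  refine (Finset.card_bij (fun x _ => insert {a, x.1} x.2) ?_ ?_ ?_).symm
  · rintro ⟨b, Q⟩ hbQ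
    obtain ⟨hb, hQ⟩ : b ∈ O.erase a ∧ Q ∈ pairings (O \ {a, b}) := Finset.mem_sigma.1 hbQ
    obtain ⟨hba, hbO⟩ := Finset.mem_erase.1 hb
    exact mem_pairings.2 ((mem_pairings.1 hQ).insert (Finset.card_pair hba.symm)
      (Finset.insert_subset ha (Finset.singleton_subset_iff.2 hbO)))
  · rintro ⟨b, Q⟩ hbQ ⟨b', Q'⟩ hbQ' h
    obtain ⟨hb, hQ⟩ : b ∈ O.erase a ∧ Q ∈ pairings (O \ {a, b}) := Finset.mem_sigma.1 hbQ
    obtain ⟨-, hQ'⟩ : b' ∈ O.erase a ∧ Q' ∈ pairings (O \ {a, b'}) := Finset.mem_sigma.1 hbQ'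
    dsimp only at h
    have hpair : ({a, b} : Finset ι) = {a, b'} := by
      have := h ▸ Finset.mem_insert_self {a, b} Q
      exact (Finset.mem_insert.1 this).resolve_right (hnotMem hQ')
    obtain rfl : b = b' := by
      have := hpair ▸ Finset.mem_insert_of_mem (Finset.mem_singleton_self b)
      exact (Finset.mem_insert.1 this).resolve_left (Finset.ne_of_mem_erase hb) |>
        Finset.mem_singleton.1
    obtain rfl : Q = Q' := by
      rw [← Finset.erase_insert (hnotMem hQ), h, Finset.erase_insert (hnotMem hQ')]
    rfl
  · intro P hP
    obtain ⟨b, hb, hab⟩ := (mem_pairings.1 hP).exists_pair_mem ha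
    exact ⟨⟨b, P.erase {a, b}⟩,
      Finset.mem_sigma.2 ⟨hb, mem_pairings.2 ((mem_pairings.1 hP).erase hab)⟩,
      Finset.insert_erase hab⟩

theorem card_pairings_mul (l : ℕ) {O : Finset ι} (hO : O.card = 2 * l) :
    (pairings O).card * (2 ^ l * l.factorial) = (2 * l).factorial := by
  induction l generalizing O with
  | zero => simp [Finset.card_eq_zero.1 hO, pairings_empty]
  | succ l ih =>
    obtain ⟨a, ha⟩ : O.Nonempty := Finset.card_pos.1 (by omega)
    have hterm (b) (hb : b ∈ O.erase a) :
        (pairings (O \ {a, b})).card * (2 ^ (l + 1) * (l + 1).factorial) =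
          (2 * l).factorial * (2 * (l + 1)) := by
      obtain ⟨hba, hbO⟩ := Finset.mem_erase.1 hb
      have hcard : (O \ {a, b}).card = 2 * l := by
        rw [Finset.card_sdiff_of_subset (Finset.insert_subset ha
          (Finset.singleton_subset_iff.2 hbO)), Finset.card_pair hba.symm, hO]
        omega
      rw [← ih hcard, pow_succ, Nat.factorial_succ]
      ring
    rw [card_pairings_eq_sum ha, Finset.sum_mul, Finset.sum_congr rfl hterm, Finset.sum_const,
      Finset.card_erase_of_mem ha, hO, smul_eq_mul, show 2 * (l + 1) - 1 = 2 * l + 1 by omega,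
      show 2 * (l + 1) = 2 * l + 1 + 1 by ring, Nat.factorial_succ, Nat.factorial_succ]
    ring

theorem IsPairing.image {κ : Type*} [DecidableEq κ] (hP : IsPairing O P) {g : ι → κ}
    (hg : g.Injective) : IsPairing (O.image g) (P.image (Finset.image g)) := by
  refine ⟨?_, ?_, ?_⟩
  · simp only [Finset.mem_image, forall_exists_index, and_imp, forall_apply_eq_imp_iff₂]
    exact fun p hp => (Finset.card_image_of_injective p hg).trans (hP.1 p hp)
  · simp only [Finset.mem_image, forall_exists_index, and_imp, forall_apply_eq_imp_iff₂]
    exact fun p hp p' hp' hne => (Finset.disjoint_image hg).2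
      (hP.2.1 p hp p' hp' fun h => hne (h ▸ rfl))
  · rw [Finset.image_biUnion, ← hP.2.2, Finset.biUnion_image]
    rfl

/-- For symmetric `A`, this is the hafnian of the matrix `A`. -/
def hafnian [Fintype ι] (A : ι → ι → ℝ) : ℝ :=
  ∑ P ∈ pairings Finset.univ, ∏ p ∈ P, pairVal A p

theorem hafnian_comp_perm [Fintype ι] (A : ι → ι → ℝ) (σ : Equiv.Perm ι) :
    hafnian (fun i j => A (σ i) (σ j)) = hafnian A := by
  have hmaps (τ : Equiv.Perm ι) {P : Finset (Finset ι)} (hP : P ∈ pairings Finset.univ) :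
      P.image (Finset.image τ) ∈ pairings Finset.univ := by
    simpa [Finset.image_univ_equiv] using mem_pairings.2 ((mem_pairings.1 hP).image τ.injective)
  refine Finset.sum_nbij' (fun P => P.image (Finset.image σ))
    (fun P => P.image (Finset.image σ.symm)) (fun _ => hmaps σ) (fun _ => hmaps σ.symm)
    (fun P _ => by simp [Finset.image_image, Function.comp_def])
    (fun P _ => by simp [Finset.image_image, Function.comp_def]) fun P _ => ?_
  rw [Finset.prod_image (Finset.image_injective σ.injective).injOn]
  exact Finset.prod_congr rfl fun p _ => (pairVal_image σ.injective A p).symm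

end Pairings

open ProbabilityTheory

section ProductMeasure

variable {ι α : Type*} [Fintype ι] [MeasurableSpace α] {ν : Measure α} [IsProbabilityMeasure ν]

theorem indepFun_pi_of_dependsOn_of_disjoint {S T : Finset ι} (hST : Disjoint S T)
    {F G : (ι → α) → ℝ} (hF : Measurable F) (hG : Measurable G)
    (hFS : DependsOn F S) (hGT : DependsOn G T) :
    IndepFun F G (Measure.pi fun _ : ι => ν) := by
  classical
  obtain ⟨x₀⟩ := nonempty_of_isProbabilityMeasure (Measure.pi fun _ : ι => ν)
  have hcoord : IndepFun (fun x (i : S) => x i) (fun x (i : T) => x i)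
      (Measure.pi fun _ : ι => ν) :=
    (iIndepFun_pi (X := fun _ => id) fun _ => aemeasurable_id).indepFun_finset S T hST
      measurable_pi_apply
  let extend (U : Finset ι) (z : U → α) : ι → α := fun i => if h : i ∈ U then z ⟨i, h⟩ else x₀ i
  have hextend (U : Finset ι) : Measurable (extend U) := by
    refine measurable_pi_lambda _ fun i => ?_
    by_cases h : i ∈ U <;> simp only [extend, h, dite_true, dite_false] <;> fun_prop
  have hfactor {H : (ι → α) → ℝ} {U : Finset ι} (hH : DependsOn H U) :
      H = (H ∘ extend U) ∘ fun x (i : U) => x i :=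
    funext fun x => hH fun i hi => by simp [extend, Finset.mem_coe.1 hi]
  rw [hfactor hFS, hfactor hGT]
  exact hcoord.comp (hF.comp (hextend S)) (hG.comp (hextend T))

variable {P : Finset (Finset ι)} {F : Finset ι → (ι → α) → ℝ}

theorem indepFun_prod_of_dependsOn [DecidableEq ι] {q : Finset ι} (hqP : q ∉ P)
    (hP : (↑(insert q P) : Set (Finset ι)).PairwiseDisjoint id)
    (hF : ∀ p ∈ insert q P, Measurable (F p)) (hFp : ∀ p ∈ insert q P, DependsOn (F p) p) :
    IndepFun (F q) (fun x => ∏ p ∈ P, F p x) (Measure.pi fun _ : ι => ν) := by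
  have hdisj : Disjoint q (P.biUnion id) :=
    (Finset.disjoint_biUnion_right _ _ _).2 fun p hp =>
      hP (by simp) (by simp [hp]) (by rintro rfl; exact hqP hp)
  have hrest : DependsOn (fun x => ∏ p ∈ P, F p x) ↑(P.biUnion id) := fun x y hxy =>
    Finset.prod_congr rfl fun p hp =>
      hFp p (by simp [hp]) fun i hi => hxy i (by simpa using ⟨p, hp, hi⟩)
  exact indepFun_pi_of_dependsOn_of_disjoint hdisj (hF q (by simp))
    (Finset.measurable_prod _ fun p hp => hF p (by simp [hp])) (hFp q (by simp)) hrest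

theorem integrable_prod_of_dependsOn_pairwiseDisjoint
    (hP : (P : Set (Finset ι)).PairwiseDisjoint id)
    (hF : ∀ p ∈ P, Measurable (F p)) (hFp : ∀ p ∈ P, DependsOn (F p) p)
    (hint : ∀ p ∈ P, Integrable (F p) (Measure.pi fun _ : ι => ν)) :
    Integrable (fun x => ∏ p ∈ P, F p x) (Measure.pi fun _ : ι => ν) := by
  classical
  induction P using Finset.induction_on with
  | empty => simp
  | insert q P hqP ih =>
    simp only [Finset.prod_insert hqP]
    exact (indepFun_prod_of_dependsOn hqP hP hF hFp).integrable_mul (hint q (by simp))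
      (ih (hP.subset (by simp)) (fun p hp => hF p (by simp [hp]))
        (fun p hp => hFp p (by simp [hp])) fun p hp => hint p (by simp [hp]))

theorem integral_prod_of_dependsOn_pairwiseDisjoint
    (hP : (P : Set (Finset ι)).PairwiseDisjoint id)
    (hF : ∀ p ∈ P, Measurable (F p)) (hFp : ∀ p ∈ P, DependsOn (F p) p) :
    ∫ x, ∏ p ∈ P, F p x ∂Measure.pi (fun _ : ι => ν) =
      ∏ p ∈ P, ∫ x, F p x ∂Measure.pi (fun _ : ι => ν) := by
  classical
  induction P using Finset.induction_on with
  | empty => simp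
  | insert q P hqP ih =>
    simp only [Finset.prod_insert hqP]
    rw [(indepFun_prod_of_dependsOn (ν := ν) hqP hP hF hFp).integral_fun_mul_eq_mul_integral
      (hF q (by simp)).aestronglyMeasurable
      (Finset.measurable_prod _ fun p hp => hF p (by simp [hp])).aestronglyMeasurable,
      ih (hP.subset (by simp)) (fun p hp => hF p (by simp [hp]))
        (fun p hp => hFp p (by simp [hp]))]

end ProductMeasure

section PairIntegral

variable {ι α : Type*} [Fintype ι] [MeasurableSpace α] {ν : Measure α} [IsProbabilityMeasure ν]

theorem map_pi_apply_prodMk {a b : ι} (hab : a ≠ b) :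
    (Measure.pi fun _ : ι => ν).map (fun x => (x a, x b)) = ν.prod ν := by
  have hindep := (iIndepFun_pi (μ := fun _ : ι => ν) (X := fun _ => id)
    fun _ => aemeasurable_id).indepFun hab
  rw [(indepFun_iff_map_prod_eq_prod_map_map (measurable_pi_apply a).aemeasurable
    (measurable_pi_apply b).aemeasurable).1 hindep,
    (measurePreserving_eval (fun _ : ι => ν) a).map_eq,
    (measurePreserving_eval (fun _ : ι => ν) b).map_eq]

variable {F : α → α → ℝ} (hsymm : ∀ x y, F x y = F y x)
  (hF : Integrable (Function.uncurry F) (ν.prod ν)) {p : Finset ι} (hp : p.card = 2)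
include hsymm hF hp

theorem integrable_pi_pairVal :
    Integrable (fun x => pairVal (fun i j => F (x i) (x j)) p) (Measure.pi fun _ : ι => ν) := by
  classical
  obtain ⟨a, b, hab, rfl⟩ := Finset.card_eq_two.1 hp
  simp_rw [pairVal_pair_of_symm (fun i j => hsymm _ _) hab]
  rw [← map_pi_apply_prodMk hab] at hF
  exact (integrable_map_measure hF.aestronglyMeasurable (by fun_prop)).1 hF

theorem integral_pi_pairVal :
    ∫ x, pairVal (fun i j => F (x i) (x j)) p ∂Measure.pi (fun _ : ι => ν) =
      ∫ x, ∫ y, F x y ∂ν ∂ν := by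
  classical
  obtain ⟨a, b, hab, rfl⟩ := Finset.card_eq_two.1 hp
  simp_rw [pairVal_pair_of_symm (fun i j => hsymm _ _) hab]
  calc ∫ x, F (x a) (x b) ∂Measure.pi (fun _ : ι => ν)
      = ∫ z, Function.uncurry F z ∂(Measure.pi fun _ : ι => ν).map (fun x => (x a, x b)) :=
        (integral_map (by fun_prop)
          ((map_pi_apply_prodMk (ν := ν) hab).symm ▸ hF.aestronglyMeasurable)).symm
    _ = ∫ x, ∫ y, F x y ∂ν ∂ν := by rw [map_pi_apply_prodMk hab, integral_prod _ hF]; rfl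

end PairIntegral

section HafnianIntegral

variable {ι α : Type*} [MeasurableSpace α] {F : α → α → ℝ}
  [Fintype ι] [DecidableEq ι] {ν : Measure α} [IsProbabilityMeasure ν]
  (hFm : Measurable (Function.uncurry F)) (hsymm : ∀ x y, F x y = F y x)
  (hF : Integrable (Function.uncurry F) (ν.prod ν))
include hFm hsymm hF

theorem IsPairing.integrable_pi_prod_pairVal {O : Finset ι} {P : Finset (Finset ι)}
    (hP : IsPairing O P) :
    Integrable (fun x => ∏ p ∈ P, pairVal (fun i j => F (x i) (x j)) p)
      (Measure.pi fun _ : ι => ν) :=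
  integrable_prod_of_dependsOn_pairwiseDisjoint hP.pairwiseDisjoint
    (fun p _ => measurable_pairVal hFm p) (fun p _ => dependsOn_pairVal F p)
    fun p hp => integrable_pi_pairVal hsymm hF (hP.1 p hp)

theorem IsPairing.integral_pi_prod_pairVal {O : Finset ι} {P : Finset (Finset ι)}
    (hP : IsPairing O P) :
    ∫ x, ∏ p ∈ P, pairVal (fun i j => F (x i) (x j)) p ∂Measure.pi (fun _ : ι => ν) =
      (∫ x, ∫ y, F x y ∂ν ∂ν) ^ P.card := by
  rw [integral_prod_of_dependsOn_pairwiseDisjoint hP.pairwiseDisjoint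
    (fun p _ => measurable_pairVal hFm p) (fun p _ => dependsOn_pairVal F p),
    Finset.prod_congr rfl fun p hp => integral_pi_pairVal hsymm hF (hP.1 p hp), Finset.prod_const]

theorem integrable_pi_hafnian :
    Integrable (fun x => hafnian fun i j => F (x i) (x j)) (Measure.pi fun _ : ι => ν) :=
  integrable_finsetSum _ fun _ hP => (mem_pairings.1 hP).integrable_pi_prod_pairVal hFm hsymm hF

theorem integral_pi_hafnian {l : ℕ} (hι : Fintype.card ι = 2 * l) :
    ∫ x, hafnian (fun i j => F (x i) (x j)) ∂Measure.pi (fun _ : ι => ν) =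
      (pairings (Finset.univ : Finset ι)).card * (∫ x, ∫ y, F x y ∂ν ∂ν) ^ l := by
  have hterm (P) (hP : P ∈ pairings (Finset.univ : Finset ι)) :
      ∫ x, ∏ p ∈ P, pairVal (fun i j => F (x i) (x j)) p ∂Measure.pi (fun _ : ι => ν) =
        (∫ x, ∫ y, F x y ∂ν ∂ν) ^ l := by
    have hP := mem_pairings.1 hP
    have hcard := hP.two_mul_card
    rw [Finset.card_univ, hι] at hcard
    rw [hP.integral_pi_prod_pairVal hFm hsymm hF, show P.card = l by omega]
  unfold hafnian
  rw [integral_finsetSum _ fun _ hP => (mem_pairings.1 hP).integrable_pi_prod_pairVal hFm hsymm hF,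
    Finset.sum_congr rfl hterm, Finset.sum_const, nsmul_eq_mul]

end HafnianIntegral

theorem measurePreserving_comp_perm {ι α : Type*} [Fintype ι] [MeasurableSpace α] (ν : Measure α)
    [SigmaFinite ν] (σ : Equiv.Perm ι) :
    MeasurePreserving (fun x : ι → α => x ∘ σ) (Measure.pi fun _ => ν) (Measure.pi fun _ => ν) :=
  measurePreserving_arrowCongr' (fun _ => ν) (fun _ => ν) σ.symm (.refl α)
    fun _ => .id ν

theorem measurableSet_setOf_monotone {ι : Type*} [Preorder ι] [Countable ι] :
    MeasurableSet {x : ι → ℝ | Monotone x} := by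
  have : {x : ι → ℝ | Monotone x} = ⋂ i, ⋂ j, ⋂ (_ : i ≤ j), {x | x i ≤ x j} := by
    ext x
    simp [Monotone]
  rw [this]
  exact .iInter fun i => .iInter fun j => .iInter fun _ =>
    measurableSet_le (measurable_pi_apply i) (measurable_pi_apply j)

theorem volume_setOf_apply_eq_apply {ι : Type*} [Fintype ι] {i j : ι}
    (hij : i ≠ j) : volume {x : ι → ℝ | x i = x j} = 0 := by
  classical
  let L : (ι → ℝ) →ₗ[ℝ] ℝ := LinearMap.proj (R := ℝ) (φ := fun _ : ι => ℝ) i - LinearMap.proj j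
  have hker : {x : ι → ℝ | x i = x j} = LinearMap.ker L := by
    ext x
    simp [L, sub_eq_zero]
  rw [hker]
  refine Measure.addHaar_submodule _ _ fun htop => ?_
  have hsingle : Pi.single i (1 : ℝ) ∈ LinearMap.ker L := htop ▸ Submodule.mem_top
  simp [L, hij.symm] at hsingle

theorem ae_injective_volume {ι : Type*} [Fintype ι] :
    ∀ᵐ x : ι → ℝ, x.Injective := by
  have : {x : ι → ℝ | ¬ x.Injective} = ⋃ i, ⋃ j, ⋃ (_ : i ≠ j), {x | x i = x j} := by
    ext x
    simp [Function.Injective, and_comm]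
  rw [ae_iff, this]
  exact measure_iUnion_null fun i => measure_iUnion_null fun j =>
    measure_iUnion_null volume_setOf_apply_eq_apply

theorem integral_eq_factorial_mul_setIntegral_monotone {n : ℕ} {μ : Measure (Fin n → ℝ)}
    (hinj : ∀ᵐ x ∂μ, x.Injective)
    (hμ : ∀ σ : Equiv.Perm (Fin n), MeasurePreserving (fun x => x ∘ σ) μ μ)
    {g : (Fin n → ℝ) → ℝ} (hg : ∀ (σ : Equiv.Perm (Fin n)) x, g (x ∘ σ) = g x)
    (hint : Integrable g μ) :
    ∫ x, g x ∂μ = n.factorial * ∫ x in {x | Monotone x}, g x ∂μ := by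
  let M (σ : Equiv.Perm (Fin n)) : Set (Fin n → ℝ) := (fun x => x ∘ σ) ⁻¹' {x | Monotone x}
  have hM (σ) : MeasurableSet (M σ) := (hμ σ).measurable measurableSet_setOf_monotone
  have hcover : ⋃ σ, M σ = Set.univ :=
    Set.eq_univ_of_forall fun x => Set.mem_iUnion.2 ⟨Tuple.sort x, Tuple.monotone_sort x⟩
  -- an injective tuple is sorted by exactly one permutation
  have hdisj : Pairwise (Function.onFun (AEDisjoint μ) M) := fun σ τ hστ =>
    measure_mono_null (fun x (hx : x ∈ M σ ∩ M τ) (hinjx : x.Injective) => hστ <| Equiv.ext fun k =>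
      hinjx (congrFun (Tuple.unique_monotone hx.1 hx.2) k)) (ae_iff.1 hinj)
  have hpiece (σ) : ∫ x in M σ, g x ∂μ = ∫ x in {x | Monotone x}, g x ∂μ := by
    rw [← (hμ σ).setIntegral_preimage_emb
      (MeasurableEquiv.arrowCongr' σ.symm (.refl ℝ)).measurableEmbedding g {x | Monotone x}]
    exact setIntegral_congr_fun (hM σ) fun x _ => (hg σ x).symm
  calc ∫ x, g x ∂μ = ∫ x in ⋃ σ, M σ, g x ∂μ := by rw [hcover, Measure.restrict_univ]
    _ = ∑ σ, ∫ x in M σ, g x ∂μ := by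
      rw [integral_iUnion_ae (fun σ => (hM σ).nullMeasurableSet) hdisj
        (hcover ▸ hint.integrableOn), tsum_fintype]
    _ = n.factorial * ∫ x in {x | Monotone x}, g x ∂μ := by
      simp [hpiece, Fintype.card_perm]

instance isProbabilityMeasure_restrict_Icc_zero_one :
    IsProbabilityMeasure (volume.restrict (Set.Icc (0 : ℝ) 1)) :=
  ⟨by simp⟩

theorem exists_continuous_symm_eqOn_Icc {f : ℝ → ℝ → ℝ}
    (hf : ContinuousOn (fun p : ℝ × ℝ => f p.1 p.2) (Set.Icc 0 1 ×ˢ Set.Icc 0 1))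
    (hsymm : ∀ s ∈ Set.Icc (0 : ℝ) 1, ∀ t ∈ Set.Icc (0 : ℝ) 1, f s t = f t s) :
    ∃ F : ℝ → ℝ → ℝ, Continuous (Function.uncurry F) ∧ (∀ x y, F x y = F y x) ∧
      ∀ x ∈ Set.Icc (0 : ℝ) 1, ∀ y ∈ Set.Icc (0 : ℝ) 1, F x y = f x y := by
  let π (x : ℝ) : ℝ := Set.projIcc 0 1 zero_le_one x
  have hπ : ∀ x, π x ∈ Set.Icc (0 : ℝ) 1 := fun x => (Set.projIcc 0 1 zero_le_one x).2
  have hπc : Continuous π := continuous_subtype_val.comp continuous_projIcc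
  refine ⟨fun x y => f (π x) (π y), ?_, fun x y => hsymm _ (hπ x) _ (hπ y), fun x hx y hy => ?_⟩
  · exact hf.comp_continuous (f := fun z : ℝ × ℝ => (π z.1, π z.2)) (by fun_prop)
      fun z => ⟨hπ z.1, hπ z.2⟩
  · simp [π, Set.projIcc_of_mem _ hx, Set.projIcc_of_mem _ hy]

theorem orderedSimplex_eq (n : ℕ) :
    orderedSimplex n = {s | Monotone s} ∩ Set.univ.pi fun _ => Set.Icc (0 : ℝ) 1 := by
  ext s
  simp only [orderedSimplex, Set.mem_inter_iff, Set.mem_ofPred_eq, Set.mem_univ_pi]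

theorem measurableSet_orderedSimplex (n : ℕ) : MeasurableSet (orderedSimplex n) :=
  orderedSimplex_eq n ▸
    measurableSet_setOf_monotone.inter (.univ_pi fun _ => measurableSet_Icc)

theorem pi_restrict_Icc_eq_restrict_pi {ι : Type*} [Fintype ι] (a b : ℝ) :
    Measure.pi (fun _ : ι => volume.restrict (Set.Icc a b)) =
      volume.restrict (Set.univ.pi fun _ => Set.Icc a b) := by
  rw [volume_pi, Measure.restrict_pi_pi]

theorem volume_restrict_orderedSimplex (n : ℕ) :
    volume.restrict (orderedSimplex n) =
      (Measure.pi fun _ : Fin n => volume.restrict (Set.Icc (0 : ℝ) 1)).restrict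
        {s | Monotone s} := by
  rw [pi_restrict_Icc_eq_restrict_pi, Measure.restrict_restrict measurableSet_setOf_monotone,
    orderedSimplex_eq]

theorem factorial_mul_setIntegral_orderedSimplex_hafnian {F : ℝ → ℝ → ℝ}
    (hF : Continuous (Function.uncurry F)) (hsymm : ∀ x y, F x y = F y x) (l : ℕ) :
    (2 * l).factorial * ∫ s in orderedSimplex (2 * l), hafnian (fun i j => F (s i) (s j)) =
      (pairings (Finset.univ : Finset (Fin (2 * l)))).card *
        (∫ x in Set.Icc (0 : ℝ) 1, ∫ y in Set.Icc (0 : ℝ) 1, F x y) ^ l := by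
  let ν := volume.restrict (Set.Icc (0 : ℝ) 1)
  have hFint : Integrable (Function.uncurry F) (ν.prod ν) := by
    rw [Measure.prod_restrict, ← Measure.volume_eq_prod]
    exact hF.continuousOn.integrableOn_compact (isCompact_Icc.prod isCompact_Icc)
  have hinj : ∀ᵐ s ∂Measure.pi (fun _ : Fin (2 * l) => ν), s.Injective :=
    pi_restrict_Icc_eq_restrict_pi (ι := Fin (2 * l)) 0 1 ▸ ae_restrict_of_ae ae_injective_volume
  rw [volume_restrict_orderedSimplex, ← integral_eq_factorial_mul_setIntegral_monotone hinj
    (measurePreserving_comp_perm ν) (fun σ s => hafnian_comp_perm (fun i j => F (s i) (s j)) σ)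
    (integrable_pi_hafnian hF.measurable hsymm hFint)]
  exact integral_pi_hafnian hF.measurable hsymm hFint (Fintype.card_fin _)

/-- **The time-ordered integral of the Wick pairing sum of a symmetric kernel:**
`∫_{0 ≤ s₁ ≤ ⋯ ≤ s_{2l} ≤ 1} ∑_{pairings P} ∏_{{i,j} ∈ P} f(sᵢ, sⱼ) ds
  = 1/(l! 2^l) (∫_{[0,1]²} f)^l`. -/
theorem integral_pairing_sum_eq (l : ℕ) (f : ℝ → ℝ → ℝ)
    (hf : ContinuousOn (fun p : ℝ × ℝ => f p.1 p.2) (Set.Icc 0 1 ×ˢ Set.Icc 0 1))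
    (hsymm : ∀ s ∈ Set.Icc (0 : ℝ) 1, ∀ t ∈ Set.Icc (0 : ℝ) 1, f s t = f t s) :
    (∫ s in orderedSimplex (2 * l),
        ∑ P ∈ pairings (Finset.univ : Finset (Fin (2 * l))), ∏ p ∈ P,
          pairVal (fun i j => f (s i) (s j)) p) =
      (1 / ((l.factorial : ℝ) * 2 ^ l)) *
        (∫ x in Set.Icc (0 : ℝ) 1, ∫ y in Set.Icc (0 : ℝ) 1, f x y) ^ l := by
  obtain ⟨F, hFc, hFsymm, hFf⟩ := exists_continuous_symm_eqOn_Icc hf hsymm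
  have hsimplex : ∫ s in orderedSimplex (2 * l), hafnian (fun i j => f (s i) (s j)) =
      ∫ s in orderedSimplex (2 * l), hafnian (fun i j => F (s i) (s j)) :=
    setIntegral_congr_fun (measurableSet_orderedSimplex _) fun s hs =>
      congrArg hafnian (funext₂ fun i j => (hFf _ (hs.2 i) _ (hs.2 j)).symm)
  have hsquare : ∫ x in Set.Icc (0 : ℝ) 1, ∫ y in Set.Icc (0 : ℝ) 1, f x y =
      ∫ x in Set.Icc (0 : ℝ) 1, ∫ y in Set.Icc (0 : ℝ) 1, F x y :=
    setIntegral_congr_fun measurableSet_Icc fun x hx =>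
      setIntegral_congr_fun measurableSet_Icc fun y hy => (hFf x hx y hy).symm
  have hcount : ((pairings (Finset.univ : Finset (Fin (2 * l)))).card : ℝ) *
      (2 ^ l * l.factorial) = (2 * l).factorial := by
    exact_mod_cast card_pairings_mul l (by simp)
  change ∫ s in orderedSimplex (2 * l), hafnian (fun i j => f (s i) (s j)) = _
  rw [hsimplex, hsquare]
  apply mul_left_cancel₀ (show ((2 * l).factorial : ℝ) ≠ 0 by positivity)
  rw [factorial_mul_setIntegral_orderedSimplex_hafnian hFc hFsymm, ← hcount]
  field_simp
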